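/- arXiv:2110.03258 — 2 statements merged into one kernel-verified Lean document; each statement's English description precedes it below -/
import Mathlib

section
/- Fix integers K, N, a, b with m = a*N − b*K > 0. The map sending σ to the pair (𝓛(σ), σ restricted to Δ(σ)) is a bijection from DPT(K,N,a,b) onto Ω(K,N,a,b), the set of pairs (𝓛, τ) where 𝓛 is a (K,N)-periodic lattice path with 𝓛 < 𝓛[a,b] and τ is a standard filling of Δ(𝓛) by the numbers 1,…,m whose (K,N)-periodic extension to Δ'(𝓛) is standard. -/
/-- A standard doubly periodic tableau with respect to `(K, N, a, b)`. -/
def IsDPT (K N a b : ℤ) (σ : ℤ × ℤ → ℤ) : Prop :=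
  Function.Surjective σ ∧
  (∀ x y : ℤ, σ (x + K, y - N) = σ (x, y)) ∧
  (∀ x y : ℤ, σ (x + a, y - b) = σ (x, y) + (a * N - b * K)) ∧
  (∀ x y : ℤ, σ (x, y) < σ (x + 1, y)) ∧
  (∀ x y : ℤ, σ (x, y) < σ (x, y + 1))

/-- A `(K,N)`-periodic lattice path. -/
def IsLP (K N : ℤ) (L : ℤ → ℤ) : Prop :=
  Antitone L ∧ ∀ y : ℤ, L (y + N) = L y - K

/-- The shifted path `L[a,b] : y ↦ L(y+b) + a`. -/
def LPshift (a b : ℤ) (L : ℤ → ℤ) : ℤ → ℤ := fun y => L (y + b) + a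

/-- The extended fundamental domain `Δ'(L)`. -/
def DeltaP (a b : ℤ) (L : ℤ → ℤ) : Set (ℤ × ℤ) :=
  {p : ℤ × ℤ | L p.2 ≤ p.1 ∧ p.1 < LPshift a b L p.2}

/-- The fundamental domain `Δ(L) = {(x,y) ∈ Δ'(L) : 0 ≤ y < N}`. -/
def Delta (N a b : ℤ) (L : ℤ → ℤ) : Set (ℤ × ℤ) :=
  {p : ℤ × ℤ | p ∈ DeltaP a b L ∧ 0 ≤ p.2 ∧ p.2 < N}

/-- A standard filling of `Δ(L)` by the numbers `1, …, m`. -/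
def IsStdFilling (K N a b : ℤ) (L : ℤ → ℤ) (τ : ℤ × ℤ → ℤ) : Prop :=
  Set.BijOn τ (Delta N a b L) (Set.Icc 1 (a * N - b * K)) ∧
  (∀ x y : ℤ, (x, y) ∈ Delta N a b L → (x + 1, y) ∈ Delta N a b L →
    τ (x, y) < τ (x + 1, y)) ∧
  (∀ x y : ℤ, (x, y) ∈ Delta N a b L → (x, y + 1) ∈ Delta N a b L →
    τ (x, y) < τ (x, y + 1))

/-- Standardness of the `(K,N)`-periodic extension of a filling of `Δ` to `Δ'`. -/
def ExtStandard (K N : ℤ) (Δ : Set (ℤ × ℤ)) (τ : ℤ × ℤ → ℤ) : Prop :=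
  ∀ x y x' y' s s' : ℤ, (x, y) ∈ Δ → (x', y') ∈ Δ →
    ((x + s * K + 1 = x' + s' * K ∧ y - s * N = y' - s' * N) → τ (x, y) < τ (x', y')) ∧
    ((x + s * K = x' + s' * K ∧ y - s * N + 1 = y' - s' * N) → τ (x, y) < τ (x', y'))

/-- Membership in `Ω(K,N,a,b)`: pairs `(L, τ)` with `L` a `(K,N)`-periodic lattice
path satisfying `L < L[a,b]` and `τ` a standard filling of `Δ(L)` by `1,…,m` whose
periodic extension to `Δ'(L)` is standard (normalized to be `0` outside `Δ(L)`). -/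
def OmegaCond (K N a b : ℤ) (L : ℤ → ℤ) (τ : ℤ × ℤ → ℤ) : Prop :=
  IsLP K N L ∧ (∀ y : ℤ, L y ≤ LPshift a b L y) ∧ L ≠ LPshift a b L ∧
  IsStdFilling K N a b L τ ∧ ExtStandard K N (Delta N a b L) τ ∧
  ∀ p : ℤ × ℤ, p ∉ Delta N a b L → τ p = 0

/-!
For a path `L` with `L ≤ L[a,b]`, the translates of `Δ'(L)` by `t • (a, -b)`, `t ∈ ℤ`, tile the
plane, and inside `Δ'(L)` the strip `Δ(L)` is a fundamental domain for translation by `(K, -N)`.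
Hence every cell `p` has a unique level `t` with `p - t • (a, -b) ∈ Δ'(L)`, and a tableau `σ` with
`𝓛(σ) = L` satisfies `σ p = τ' (p - t • (a, -b)) + t m`, where `τ'` is the periodic extension of
`σ` restricted to `Δ(L)`. Conversely this formula turns any `(L, τ) ∈ Ω` into a tableau: it
increases across levels because the values at level `t` lie in `[t m + 1, t m + m]`, and within a
level because `τ'` is standard. That `σ` is injective on `Δ(σ)` follows by counting:
`|Δ(L)| = ∑_{0 ≤ y < N} (L (y + b) + a - L y) = a N - b K`.
-/

open Function Set

theorem map_add_zsmul_of_map_add {G H : Type*} [AddGroup G] [AddGroup H] {f : G → H} {a : G}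
    {b : H} (hf : ∀ x, f (x + a) = f x + b) (x : G) (n : ℤ) : f (x + n • a) = f x + n • b :=
  AddConstMapClass.map_add_zsmul (⟨f, hf⟩ : AddConstMap G H a b) x n

section QuasiPeriodic

variable {f : ℤ → ℤ} {P Q : ℤ}

theorem Monotone.isLeast_sInf_of_map_add (hf : Monotone f) (hQ : 0 < Q)
    (hper : ∀ x, f (x + P) = f x + Q) (c : ℤ) : IsLeast {x | c ≤ f x} (sInf {x | c ≤ f x}) := by
  have hshift (k : ℤ) : f (k * P) = f 0 + k * Q := by
    simpa using map_add_zsmul_of_map_add hper 0 k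
  set k := |c - f 0| + 1
  have hk : k ≤ k * Q := le_mul_of_one_le_right (by positivity) hQ
  have hc := neg_abs_le (c - f 0)
  have hbdd : BddBelow {x | c ≤ f x} := by
    refine ⟨-k * P, fun x (hx : c ≤ f x) => ?_⟩
    by_contra! hlt
    have := hf hlt.le
    rw [hshift] at this
    linarith
  have hne : {x | c ≤ f x}.Nonempty := ⟨k * P, by
    change c ≤ f (k * P)
    rw [hshift]
    linarith [le_abs_self (c - f 0)]⟩
  exact ⟨Int.csInf_mem hne hbdd, fun x hx => csInf_le hbdd hx⟩

theorem Monotone.sInf_le_iff_of_map_add (hf : Monotone f) (hQ : 0 < Q)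
    (hper : ∀ x, f (x + P) = f x + Q) {c x : ℤ} : sInf {x | c ≤ f x} ≤ x ↔ c ≤ f x :=
  have h := hf.isLeast_sInf_of_map_add hQ hper c
  ⟨fun hx => h.1.trans (hf hx), fun hx => h.2 hx⟩

end QuasiPeriodic

section Tableaux

variable {K N a b : ℤ} {L : ℤ → ℤ}

theorem IsLP.apply_add_mul (hL : IsLP K N L) (y s : ℤ) : L (y + s * N) = L y - s * K := by
  simpa [smul_eq_mul, ← sub_eq_add_neg] using
    map_add_zsmul_of_map_add (f := L) (b := -K) (fun y => by rw [hL.2 y, sub_eq_add_neg]) y s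

theorem IsLP.mem_deltaP_translate_iff (hL : IsLP K N L) {x y : ℤ} (s : ℤ) :
    (x + s * K, y - s * N) ∈ DeltaP a b L ↔ (x, y) ∈ DeltaP a b L := by
  have h₁ := hL.apply_add_mul y (-s)
  have h₂ := hL.apply_add_mul (y + b) (-s)
  simp only [DeltaP, LPshift, mem_ofPred_eq]
  rw [show y - s * N = y + -s * N by ring, show y + -s * N + b = y + b + -s * N by ring, h₁, h₂]
  constructor <;> rintro ⟨_, _⟩ <;> constructor <;> linarith

def toStrip (K N : ℤ) (p : ℤ × ℤ) : ℤ × ℤ := (p.1 + p.2 / N * K, p.2 % N)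

theorem toStrip_translate (hN : N ≠ 0) (x y s : ℤ) :
    toStrip K N (x + s * K, y - s * N) = toStrip K N (x, y) := by
  simp only [toStrip, sub_eq_add_neg, ← neg_mul, Int.add_mul_ediv_right _ _ hN,
    Int.add_mul_emod_self_right, Prod.mk.injEq, and_true]
  ring

theorem toStrip_eq_self {p : ℤ × ℤ} (h₀ : 0 ≤ p.2) (h₁ : p.2 < N) : toStrip K N p = p := by
  simp [toStrip, Int.ediv_eq_zero_of_lt h₀ h₁, Int.emod_eq_of_lt h₀ h₁]

theorem IsLP.toStrip_mem_delta_iff (hL : IsLP K N L) (hN : 0 < N) {p : ℤ × ℤ} :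
    toStrip K N p ∈ Delta N a b L ↔ p ∈ DeltaP a b L := by
  obtain ⟨x, y⟩ := p
  have hstrip : toStrip K N (x, y) = (x + y / N * K, y - y / N * N) := by
    simp [toStrip, Int.emod_def, mul_comm]
  have hmod : y - y / N * N = y % N := by rw [Int.emod_def, mul_comm]
  rw [hstrip, Delta, mem_ofPred_eq, hL.mem_deltaP_translate_iff, hmod]
  simp [Int.emod_nonneg y hN.ne', Int.emod_lt_of_pos y hN]

def stair (a b : ℤ) (L : ℤ → ℤ) (y t : ℤ) : ℤ := L (y + t * b) + t * a

theorem stair_zero (y : ℤ) : stair a b L y 0 = L y := by simp [stair]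

theorem mem_deltaP_iff_stair {x y t : ℤ} :
    (x - t * a, y + t * b) ∈ DeltaP a b L ↔ stair a b L y t ≤ x ∧ x < stair a b L y (t + 1) := by
  simp only [DeltaP, LPshift, stair, mem_ofPred_eq]
  rw [show y + (t + 1) * b = y + t * b + b by ring]
  constructor <;> rintro ⟨_, _⟩ <;> constructor <;> linarith

theorem monotone_stair (hle : ∀ y, L y ≤ LPshift a b L y) (y : ℤ) :
    Monotone (stair a b L y) := by
  refine monotone_int_of_le_succ fun t => ?_
  have := hle (y + t * b)
  simp only [stair, LPshift] at *
  rw [show y + (t + 1) * b = y + t * b + b by ring]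
  linarith

theorem IsLP.stair_add_period (hL : IsLP K N L) (y t : ℤ) :
    stair a b L y (t + N) = stair a b L y t + (a * N - b * K) := by
  have := hL.apply_add_mul (y + t * b) b
  simp only [stair]
  rw [show y + (t + N) * b = y + t * b + b * N by ring, this]
  ring

theorem IsLP.stair_le_stair (hL : IsLP K N L) {y y' : ℤ} (hy : y ≤ y') (t : ℤ) :
    stair a b L y' t ≤ stair a b L y t := by
  simp only [stair]
  linarith [hL.1 (by linarith : y + t * b ≤ y' + t * b)]

theorem IsLP.sum_range_shift_sub {n : ℕ} (hL : IsLP K n L) (c : ℤ) :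
    ∑ i ∈ Finset.range n, (L (i + c) - L i) = -(c * K) := by
  set D : ℤ → ℤ := fun c => ∑ i ∈ Finset.range n, (L (i + c) - L i)
  have hstep (c : ℤ) : D (c + 1) = D c + -K := by
    have htel := Finset.sum_range_sub (fun i : ℕ => L (i + c)) n
    simp only [D]
    rw [← sub_eq_iff_eq_add', ← Finset.sum_sub_distrib]
    simp only [sub_sub_sub_cancel_right]
    push_cast at htel
    simp only [show ∀ i : ℤ, i + 1 + c = i + (c + 1) from fun i => by ring] at htel
    rw [htel, zero_add, add_comm, hL.2]
    ring
  simpa [D] using map_add_zsmul_of_map_add hstep 0 c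

noncomputable def deltaFinset (n : ℕ) (a b : ℤ) (L : ℤ → ℤ) : Finset (ℤ × ℤ) :=
  (Finset.range n).biUnion fun i => Finset.Ico (L i) (L (i + b) + a) ×ˢ {(i : ℤ)}

theorem coe_deltaFinset (n : ℕ) : (deltaFinset n a b L : Set (ℤ × ℤ)) = Delta n a b L := by
  ext ⟨x, y⟩
  simp only [deltaFinset, Delta, DeltaP, LPshift, Finset.coe_biUnion, Finset.coe_product,
    Finset.coe_Ico, Finset.coe_singleton, mem_iUnion, mem_prod, mem_Ico, mem_singleton_iff,
    Finset.mem_coe, Finset.mem_range, mem_ofPred_eq, exists_prop]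
  constructor
  · rintro ⟨i, hi, hx, rfl⟩
    exact ⟨hx, by positivity, by exact_mod_cast hi⟩
  · rintro ⟨hx, hy₀, hy⟩
    lift y to ℕ using hy₀
    exact ⟨y, by exact_mod_cast hy, hx, rfl⟩

theorem IsLP.card_deltaFinset {n : ℕ} (hL : IsLP K n L) (hle : ∀ y, L y ≤ LPshift a b L y) :
    ((deltaFinset n a b L).card : ℤ) = a * n - b * K := by
  rw [deltaFinset, Finset.card_biUnion]
  · push_cast
    simp only [Finset.card_product, Finset.card_singleton, mul_one, Int.card_Ico]
    calc ∑ i ∈ Finset.range n, (((L (i + b) + a - L i).toNat : ℕ) : ℤ)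
        = ∑ i ∈ Finset.range n, ((L (i + b) - L i) + a) := by
          refine Finset.sum_congr rfl fun i _ => ?_
          have := hle i
          rw [LPshift] at this
          rw [Int.toNat_of_nonneg (by linarith)]
          ring
      _ = a * n - b * K := by
          rw [Finset.sum_add_distrib, hL.sum_range_shift_sub]
          simp
          ring
  · intro i _ j _ hij
    simp only [Finset.disjoint_left, Finset.mem_product, Finset.mem_singleton]
    rintro p ⟨-, hi⟩ ⟨-, hj⟩
    exact hij (by exact_mod_cast hi.symm.trans hj)

theorem IsLP.ncard_delta {n : ℕ} (hL : IsLP K n L) (hle : ∀ y, L y ≤ LPshift a b L y) :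
    (Delta n a b L).ncard = (Icc 1 (a * n - b * K)).ncard := by
  have := hL.card_deltaFinset hle
  rw [← coe_deltaFinset, ncard_coe_finset, ← Finset.coe_Icc, ncard_coe_finset, Int.card_Icc]
  omega

-- the largest `t` with `stair a b L p.2 t ≤ p.1`
noncomputable def level (a b : ℤ) (L : ℤ → ℤ) (p : ℤ × ℤ) : ℤ :=
  sInf {t | p.1 + 1 ≤ stair a b L p.2 t} - 1

noncomputable def baseCell (a b : ℤ) (L : ℤ → ℤ) (p : ℤ × ℤ) : ℤ × ℤ :=
  (p.1 - level a b L p * a, p.2 + level a b L p * b)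

section Level

variable {p : ℤ × ℤ} {x y s t : ℤ}

theorem le_level_iff (hL : IsLP K N L) (hle : ∀ y, L y ≤ LPshift a b L y)
    (hm : 0 < a * N - b * K) : s ≤ level a b L p ↔ stair a b L p.2 s ≤ p.1 := by
  rw [level, le_sub_iff_add_le, Int.add_one_le_iff, ← not_le,
    (monotone_stair hle p.2).sInf_le_iff_of_map_add hm (hL.stair_add_period p.2), not_le,
    Int.lt_add_one_iff]

theorem level_eq_iff (hL : IsLP K N L) (hle : ∀ y, L y ≤ LPshift a b L y)
    (hm : 0 < a * N - b * K) : level a b L p = t ↔ (p.1 - t * a, p.2 + t * b) ∈ DeltaP a b L := by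
  rw [mem_deltaP_iff_stair, ← le_level_iff hL hle hm, lt_iff_not_ge, ← le_level_iff hL hle hm]
  omega

theorem baseCell_mem_deltaP (hL : IsLP K N L) (hle : ∀ y, L y ≤ LPshift a b L y)
    (hm : 0 < a * N - b * K) : baseCell a b L p ∈ DeltaP a b L :=
  (level_eq_iff hL hle hm).1 rfl

theorem level_nonneg_iff (hL : IsLP K N L) (hle : ∀ y, L y ≤ LPshift a b L y)
    (hm : 0 < a * N - b * K) : 0 ≤ level a b L p ↔ L p.2 ≤ p.1 := by
  rw [le_level_iff hL hle hm, stair_zero]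

theorem level_mono (hL : IsLP K N L) (hle : ∀ y, L y ≤ LPshift a b L y)
    (hm : 0 < a * N - b * K) {p p' : ℤ × ℤ} (h₁ : p.1 ≤ p'.1) (h₂ : p.2 ≤ p'.2) :
    level a b L p ≤ level a b L p' :=
  (le_level_iff hL hle hm).2 <|
    (hL.stair_le_stair h₂ _).trans <| ((le_level_iff hL hle hm).1 le_rfl).trans h₁

theorem level_translate_period (hL : IsLP K N L) (hle : ∀ y, L y ≤ LPshift a b L y)
    (hm : 0 < a * N - b * K) : level a b L (x + K, y - N) = level a b L (x, y) := by
  rw [level_eq_iff hL hle hm]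
  have := (hL.mem_deltaP_translate_iff 1).2 (baseCell_mem_deltaP hL hle hm (p := (x, y)))
  convert this using 2 <;> simp <;> ring

theorem level_translate (hL : IsLP K N L) (hle : ∀ y, L y ≤ LPshift a b L y)
    (hm : 0 < a * N - b * K) : level a b L (x + a, y - b) = level a b L (x, y) + 1 := by
  rw [level_eq_iff hL hle hm]
  convert baseCell_mem_deltaP hL hle hm (p := (x, y)) using 2 <;> simp [baseCell] <;> ring

end Level

noncomputable def dptPath (σ : ℤ × ℤ → ℤ) (y : ℤ) : ℤ := sInf {x | 1 ≤ σ (x, y)}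

namespace IsDPT

variable {σ : ℤ × ℤ → ℤ}

theorem translate (h : IsDPT K N a b σ) (s t x y : ℤ) :
    σ (x + s * K + t * a, y - s * N - t * b) = σ (x, y) + t * (a * N - b * K) := by
  have hK := map_add_zsmul_of_map_add (f := σ) (a := (K, -N)) (b := 0)
    (fun p => (h.2.1 p.1 p.2).trans (add_zero _).symm) (x, y) s
  have hab := map_add_zsmul_of_map_add (f := σ) (a := (a, -b)) (b := a * N - b * K)
    (fun p => h.2.2.1 p.1 p.2) ((x, y) + s • (K, -N)) t
  rw [hK, smul_zero, add_zero] at hab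
  convert hab using 2
  · ext <;> simp
    ring
  · simp

theorem apply_translate_period (h : IsDPT K N a b σ) (s x y : ℤ) :
    σ (x + s * K, y - s * N) = σ (x, y) := by
  simpa using h.translate s 0 x y

theorem apply_toStrip (h : IsDPT K N a b σ) (p : ℤ × ℤ) : σ (toStrip K N p) = σ p := by
  rw [← h.apply_translate_period (p.2 / N) p.1 p.2, toStrip, Int.emod_def, mul_comm N]

theorem strictMono_fst (h : IsDPT K N a b σ) (y : ℤ) : StrictMono fun x => σ (x, y) :=
  strictMono_int_of_lt_succ fun x => h.2.2.2.1 x y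

theorem strictMono_snd (h : IsDPT K N a b σ) (x : ℤ) : StrictMono fun y => σ (x, y) :=
  strictMono_int_of_lt_succ fun y => h.2.2.2.2 x y

theorem apply_add_fst (h : IsDPT K N a b σ) (x y : ℤ) :
    σ (x + (a * N - b * K), y) = σ (x, y) + N * (a * N - b * K) := by
  convert h.translate (-b) N x y using 3 <;> ring

theorem N_pos (h : IsDPT K N a b σ) (hm : 0 < a * N - b * K) : 0 < N := by
  have := h.strictMono_fst 0 (lt_add_of_pos_right 0 hm)
  simp only [h.apply_add_fst] at this
  exact pos_of_mul_pos_left (by linarith) hm.le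

theorem isLeast_dptPath (h : IsDPT K N a b σ) (hm : 0 < a * N - b * K) (y : ℤ) :
    IsLeast {x | 1 ≤ σ (x, y)} (dptPath σ y) :=
  (h.strictMono_fst y).monotone.isLeast_sInf_of_map_add (mul_pos (h.N_pos hm) hm)
    (fun x => h.apply_add_fst x y) 1

theorem dptPath_le_iff (h : IsDPT K N a b σ) (hm : 0 < a * N - b * K) {x y : ℤ} :
    dptPath σ y ≤ x ↔ 1 ≤ σ (x, y) :=
  (h.strictMono_fst y).monotone.sInf_le_iff_of_map_add (mul_pos (h.N_pos hm) hm)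
    (fun x => h.apply_add_fst x y)

theorem stair_dptPath_le_iff (h : IsDPT K N a b σ) (hm : 0 < a * N - b * K) (t x y : ℤ) :
    stair a b (dptPath σ) y t ≤ x ↔ 1 + t * (a * N - b * K) ≤ σ (x, y) := by
  have := h.translate 0 t (x - t * a) (y + t * b)
  simp only [zero_mul, add_zero, sub_zero, sub_add_cancel, add_sub_cancel_right] at this
  rw [stair, ← le_sub_iff_add_le, h.dptPath_le_iff hm, this]
  omega

theorem mem_deltaP_dptPath_iff (h : IsDPT K N a b σ) (hm : 0 < a * N - b * K) {p : ℤ × ℤ} :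
    p ∈ DeltaP a b (dptPath σ) ↔ σ p ∈ Icc 1 (a * N - b * K) := by
  obtain ⟨x, y⟩ := p
  have h₀ := h.stair_dptPath_le_iff hm 0 x y
  have h₁ := h.stair_dptPath_le_iff hm 1 x y
  simp only [stair, zero_mul, add_zero, one_mul] at h₀ h₁
  simp only [DeltaP, LPshift, mem_ofPred_eq, mem_Icc]
  omega

theorem isLP_dptPath (h : IsDPT K N a b σ) (hm : 0 < a * N - b * K) : IsLP K N (dptPath σ) := by
  refine ⟨fun y y' hy => (h.dptPath_le_iff hm).2 ?_, fun y => eq_of_forall_ge_iff fun x => ?_⟩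
  · exact (h.isLeast_dptPath hm y).1.trans ((h.strictMono_snd _).monotone hy)
  · have := h.apply_translate_period 1 x (y + N)
    rw [one_mul, one_mul, add_sub_cancel_right] at this
    rw [h.dptPath_le_iff hm, sub_le_iff_le_add, h.dptPath_le_iff hm, this]

theorem dptPath_le_shift (h : IsDPT K N a b σ) (hm : 0 < a * N - b * K) (y : ℤ) :
    dptPath σ y ≤ LPshift a b (dptPath σ) y := by
  have := (h.stair_dptPath_le_iff hm 1 (LPshift a b (dptPath σ) y) y).1 (by simp [stair, LPshift])
  rw [h.dptPath_le_iff hm]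
  linarith

theorem dptPath_ne_shift (h : IsDPT K N a b σ) (hm : 0 < a * N - b * K) :
    dptPath σ ≠ LPshift a b (dptPath σ) := by
  obtain ⟨p, hp⟩ := h.1 1
  have hmem := (h.mem_deltaP_dptPath_iff hm).2 (by rw [hp]; exact ⟨le_rfl, hm⟩)
  intro heq
  rw [DeltaP, mem_ofPred_eq, ← heq] at hmem
  exact hmem.1.not_gt hmem.2

theorem bijOn_delta (h : IsDPT K N a b σ) (hm : 0 < a * N - b * K) :
    BijOn σ (Delta N a b (dptPath σ)) (Icc 1 (a * N - b * K)) := by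
  have hL := h.isLP_dptPath hm
  have hN := h.N_pos hm
  have hmaps : MapsTo σ (Delta N a b (dptPath σ)) (Icc 1 (a * N - b * K)) :=
    fun p hp => (h.mem_deltaP_dptPath_iff hm).1 hp.1
  have hsurj : SurjOn σ (Delta N a b (dptPath σ)) (Icc 1 (a * N - b * K)) := by
    intro v hv
    obtain ⟨p, rfl⟩ := h.1 v
    exact ⟨toStrip K N p, (hL.toStrip_mem_delta_iff hN).2 ((h.mem_deltaP_dptPath_iff hm).2 hv),
      h.apply_toStrip p⟩
  refine ⟨hmaps, ?_, hsurj⟩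
  lift N to ℕ using hN.le with n
  have hfin : (Delta n a b (dptPath σ)).Finite := coe_deltaFinset n ▸ Finset.finite_toSet _
  refine injOn_of_ncard_image_eq ?_ hfin
  rw [hsurj.image_eq_of_mapsTo hmaps, hL.ncard_delta (h.dptPath_le_shift hm)]

theorem extStandard (h : IsDPT K N a b σ) (Δ : Set (ℤ × ℤ)) :
    ExtStandard K N Δ (Δ.indicator σ) := by
  intro x y x' y' s s' hp hq
  rw [indicator_of_mem hp, indicator_of_mem hq, ← h.apply_translate_period s x y,
    ← h.apply_translate_period s' x' y']
  constructor <;> rintro ⟨hx, hy⟩ <;> rw [← hx, ← hy]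
  · exact h.2.2.2.1 _ _
  · exact h.2.2.2.2 _ _

theorem omegaCond (h : IsDPT K N a b σ) (hm : 0 < a * N - b * K) :
    OmegaCond K N a b (dptPath σ) ((Delta N a b (dptPath σ)).indicator σ) := by
  refine ⟨h.isLP_dptPath hm, h.dptPath_le_shift hm, h.dptPath_ne_shift hm,
    ⟨(h.bijOn_delta hm).congr fun p hp => (indicator_of_mem hp σ).symm, ?_, ?_⟩,
    h.extStandard _, fun p hp => indicator_of_notMem hp σ⟩
  · intro x y h₁ h₂
    rw [indicator_of_mem h₁, indicator_of_mem h₂]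
    exact h.2.2.2.1 x y
  · intro x y h₁ h₂
    rw [indicator_of_mem h₁, indicator_of_mem h₂]
    exact h.2.2.2.2 x y

end IsDPT

theorem ExtStandard.toStrip_lt_right {Δ : Set (ℤ × ℤ)} {τ : ℤ × ℤ → ℤ} (hext : ExtStandard K N Δ τ)
    {x y : ℤ} (h₁ : toStrip K N (x, y) ∈ Δ) (h₂ : toStrip K N (x + 1, y) ∈ Δ) :
    τ (toStrip K N (x, y)) < τ (toStrip K N (x + 1, y)) :=
  (hext _ _ _ _ (-(y / N)) (-(y / N)) h₁ h₂).1 ⟨by ring, rfl⟩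

theorem ExtStandard.toStrip_lt_up {Δ : Set (ℤ × ℤ)} {τ : ℤ × ℤ → ℤ} (hext : ExtStandard K N Δ τ)
    {x y : ℤ} (h₁ : toStrip K N (x, y) ∈ Δ) (h₂ : toStrip K N (x, y + 1) ∈ Δ) :
    τ (toStrip K N (x, y)) < τ (toStrip K N (x, y + 1)) :=
  (hext _ _ _ _ (-(y / N)) (-((y + 1) / N)) h₁ h₂).2
    ⟨by ring, by linarith [Int.emod_add_mul_ediv y N, Int.emod_add_mul_ediv (y + 1) N]⟩

noncomputable def dptOfFilling (K N a b : ℤ) (L : ℤ → ℤ) (τ : ℤ × ℤ → ℤ) (p : ℤ × ℤ) : ℤ :=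
  τ (toStrip K N (baseCell a b L p)) + level a b L p * (a * N - b * K)

namespace OmegaCond

variable {τ : ℤ × ℤ → ℤ}

theorem N_pos (hΩ : OmegaCond K N a b L τ) (hm : 0 < a * N - b * K) : 0 < N := by
  obtain ⟨-, -, -, ⟨hbij, -, -⟩, -, -⟩ := hΩ
  obtain ⟨p, hp, -⟩ := hbij.surjOn (⟨le_rfl, hm⟩ : (1 : ℤ) ∈ Icc 1 (a * N - b * K))
  exact hp.2.1.trans_lt hp.2.2

theorem dptOfFilling_mem_Icc (hΩ : OmegaCond K N a b L τ) (hm : 0 < a * N - b * K) (p : ℤ × ℤ) :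
    dptOfFilling K N a b L τ p - level a b L p * (a * N - b * K) ∈ Icc 1 (a * N - b * K) := by
  have hN := hΩ.N_pos hm
  obtain ⟨hL, hle, -, ⟨hbij, -, -⟩, -, -⟩ := hΩ
  rw [dptOfFilling, add_sub_cancel_right]
  exact hbij.mapsTo ((hL.toStrip_mem_delta_iff hN).2 (baseCell_mem_deltaP hL hle hm))

theorem dptOfFilling_lt_of_level_lt (hΩ : OmegaCond K N a b L τ) (hm : 0 < a * N - b * K)
    {p p' : ℤ × ℤ} (hlt : level a b L p < level a b L p') :
    dptOfFilling K N a b L τ p < dptOfFilling K N a b L τ p' := by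
  have h := hΩ.dptOfFilling_mem_Icc hm p
  have h' := hΩ.dptOfFilling_mem_Icc hm p'
  have : (level a b L p + 1) * (a * N - b * K) ≤ level a b L p' * (a * N - b * K) :=
    mul_le_mul_of_nonneg_right hlt hm.le
  simp only [mem_Icc] at h h'
  linarith

theorem one_le_dptOfFilling_iff (hΩ : OmegaCond K N a b L τ) (hm : 0 < a * N - b * K)
    {p : ℤ × ℤ} : 1 ≤ dptOfFilling K N a b L τ p ↔ 0 ≤ level a b L p := by
  have h := hΩ.dptOfFilling_mem_Icc hm p
  simp only [mem_Icc] at h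
  constructor
  · intro h₁
    by_contra! hneg
    nlinarith
  · intro h₀
    nlinarith

theorem dptOfFilling_surjective (hΩ : OmegaCond K N a b L τ) (hm : 0 < a * N - b * K) :
    Surjective (dptOfFilling K N a b L τ) := by
  obtain ⟨hL, hle, -, ⟨hbij, -, -⟩, -, -⟩ := hΩ
  intro v
  have hr : (v - 1) % (a * N - b * K) + 1 ∈ Icc 1 (a * N - b * K) :=
    ⟨by linarith [Int.emod_nonneg (v - 1) hm.ne'], by linarith [Int.emod_lt_of_pos (v - 1) hm]⟩
  obtain ⟨q, hq, hτq⟩ := hbij.surjOn hr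
  set t := (v - 1) / (a * N - b * K)
  have hlev : level a b L (q.1 + t * a, q.2 - t * b) = t :=
    (level_eq_iff hL hle hm).2 (by simpa using hq.1)
  refine ⟨(q.1 + t * a, q.2 - t * b), ?_⟩
  rw [dptOfFilling, baseCell, hlev]
  simp only [add_sub_cancel_right, sub_add_cancel]
  rw [toStrip_eq_self hq.2.1 hq.2.2, hτq]
  linarith [Int.emod_add_mul_ediv (v - 1) (a * N - b * K)]

theorem dptOfFilling_translate_period (hΩ : OmegaCond K N a b L τ) (hm : 0 < a * N - b * K)
    (x y : ℤ) : dptOfFilling K N a b L τ (x + K, y - N) = dptOfFilling K N a b L τ (x, y) := by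
  simp only [dptOfFilling, baseCell, level_translate_period hΩ.1 hΩ.2.1 hm]
  congr 2
  rw [← toStrip_translate (hΩ.N_pos hm).ne' (x - level a b L (x, y) * a) _ 1]
  congr 2 <;> ring

theorem dptOfFilling_translate (hΩ : OmegaCond K N a b L τ) (hm : 0 < a * N - b * K) (x y : ℤ) :
    dptOfFilling K N a b L τ (x + a, y - b) =
      dptOfFilling K N a b L τ (x, y) + (a * N - b * K) := by
  simp only [dptOfFilling, baseCell, level_translate hΩ.1 hΩ.2.1 hm]
  rw [show x + a - (level a b L (x, y) + 1) * a = x - level a b L (x, y) * a by ring,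
    show y - b + (level a b L (x, y) + 1) * b = y + level a b L (x, y) * b by ring]
  ring

theorem dptOfFilling_lt_succ_fst (hΩ : OmegaCond K N a b L τ) (hm : 0 < a * N - b * K)
    (x y : ℤ) : dptOfFilling K N a b L τ (x, y) < dptOfFilling K N a b L τ (x + 1, y) := by
  have hN := hΩ.N_pos hm
  have hlt := hΩ.dptOfFilling_lt_of_level_lt hm (p := (x, y)) (p' := (x + 1, y))
  obtain ⟨hL, hle, -, -, hext, -⟩ := hΩ
  rcases (level_mono hL hle hm (p := (x, y)) (p' := (x + 1, y)) (by simp) le_rfl).lt_or_eq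
    with hlev | heq
  · exact hlt hlev
  · have h₁ := baseCell_mem_deltaP hL hle hm (p := (x, y))
    have h₂ := baseCell_mem_deltaP hL hle hm (p := (x + 1, y))
    simp only [dptOfFilling, baseCell, ← heq] at h₁ h₂ ⊢
    rw [show x + 1 - level a b L (x, y) * a = x - level a b L (x, y) * a + 1 by ring] at h₂ ⊢
    have := hext.toStrip_lt_right ((hL.toStrip_mem_delta_iff hN).2 h₁)
      ((hL.toStrip_mem_delta_iff hN).2 h₂)
    linarith

theorem dptOfFilling_lt_succ_snd (hΩ : OmegaCond K N a b L τ) (hm : 0 < a * N - b * K)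
    (x y : ℤ) : dptOfFilling K N a b L τ (x, y) < dptOfFilling K N a b L τ (x, y + 1) := by
  have hN := hΩ.N_pos hm
  have hlt := hΩ.dptOfFilling_lt_of_level_lt hm (p := (x, y)) (p' := (x, y + 1))
  obtain ⟨hL, hle, -, -, hext, -⟩ := hΩ
  rcases (level_mono hL hle hm (p := (x, y)) (p' := (x, y + 1)) le_rfl (by simp)).lt_or_eq
    with hlev | heq
  · exact hlt hlev
  · have h₁ := baseCell_mem_deltaP hL hle hm (p := (x, y))
    have h₂ := baseCell_mem_deltaP hL hle hm (p := (x, y + 1))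
    simp only [dptOfFilling, baseCell, ← heq] at h₁ h₂ ⊢
    rw [show y + 1 + level a b L (x, y) * b = y + level a b L (x, y) * b + 1 by ring] at h₂ ⊢
    have := hext.toStrip_lt_up ((hL.toStrip_mem_delta_iff hN).2 h₁)
      ((hL.toStrip_mem_delta_iff hN).2 h₂)
    linarith

theorem isDPT (hΩ : OmegaCond K N a b L τ) (hm : 0 < a * N - b * K) :
    IsDPT K N a b (dptOfFilling K N a b L τ) :=
  ⟨hΩ.dptOfFilling_surjective hm, hΩ.dptOfFilling_translate_period hm,
    hΩ.dptOfFilling_translate hm, hΩ.dptOfFilling_lt_succ_fst hm, hΩ.dptOfFilling_lt_succ_snd hm⟩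

theorem dptPath_dptOfFilling (hΩ : OmegaCond K N a b L τ) (hm : 0 < a * N - b * K) :
    dptPath (dptOfFilling K N a b L τ) = L := by
  funext y
  have : {x | 1 ≤ dptOfFilling K N a b L τ (x, y)} = Ici (L y) := by
    ext x
    rw [mem_ofPred_eq, hΩ.one_le_dptOfFilling_iff hm, level_nonneg_iff hΩ.1 hΩ.2.1 hm, mem_Ici]
  rw [dptPath, this, csInf_Ici]

theorem indicator_dptOfFilling (hΩ : OmegaCond K N a b L τ) (hm : 0 < a * N - b * K) :
    (Delta N a b L).indicator (dptOfFilling K N a b L τ) = τ := by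
  obtain ⟨hL, hle, -, -, -, hzero⟩ := hΩ
  funext p
  by_cases hp : p ∈ Delta N a b L
  · have hlev : level a b L p = 0 := (level_eq_iff hL hle hm).2 (by simpa using hp.1)
    rw [indicator_of_mem hp, dptOfFilling, baseCell, hlev]
    simp [toStrip_eq_self hp.2.1 hp.2.2]
  · rw [indicator_of_notMem hp, hzero p hp]

end OmegaCond

theorem IsDPT.dptOfFilling_eq {σ : ℤ × ℤ → ℤ} (h : IsDPT K N a b σ) (hm : 0 < a * N - b * K) :
    dptOfFilling K N a b (dptPath σ) ((Delta N a b (dptPath σ)).indicator σ) = σ := by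
  funext p
  have hL := h.isLP_dptPath hm
  have hq := baseCell_mem_deltaP hL (h.dptPath_le_shift hm) hm (p := p)
  have := h.translate 0 (level a b (dptPath σ) p) (baseCell a b (dptPath σ) p).1
    (baseCell a b (dptPath σ) p).2
  simp only [baseCell, zero_mul, add_zero, sub_zero, sub_add_cancel, add_sub_cancel_right] at this
  rw [dptOfFilling, indicator_of_mem ((hL.toStrip_mem_delta_iff (h.N_pos hm)).2 hq),
    h.apply_toStrip, baseCell, this]

end Tableaux

/-- The map `σ ↦ (𝓛(σ), σ|_{Δ(σ)})` is a bijection from `DPT(K,N,a,b)` onto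
`Ω(K,N,a,b)`: there is an equivalence `F` such that for every `σ`, the first
component of `F σ` is the lattice path of `σ` (its value at `y` is the least `x`
with `σ(x,y) ≥ 1`) and the second component agrees with `σ` on `Δ`. -/
theorem dpt_omega_bijection (K N a b : ℤ) (hm : 0 < a * N - b * K) :
    ∃ F : {σ : ℤ × ℤ → ℤ // IsDPT K N a b σ} ≃
          {p : (ℤ → ℤ) × (ℤ × ℤ → ℤ) // OmegaCond K N a b p.1 p.2},
      ∀ σ : {σ : ℤ × ℤ → ℤ // IsDPT K N a b σ},
        (∀ y : ℤ, IsLeast {x : ℤ | 1 ≤ σ.1 (x, y)} ((F σ).1.1 y)) ∧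
        (∀ p ∈ Delta N a b (F σ).1.1, (F σ).1.2 p = σ.1 p) := by
  refine ⟨
    { toFun := fun σ => ⟨(dptPath σ.1, (Delta N a b (dptPath σ.1)).indicator σ.1),
        σ.2.omegaCond hm⟩
      invFun := fun p => ⟨dptOfFilling K N a b p.1.1 p.1.2, p.2.isDPT hm⟩
      left_inv := fun σ => Subtype.ext (σ.2.dptOfFilling_eq hm)
      right_inv := fun p => Subtype.ext (Prod.ext (p.2.dptPath_dptOfFilling hm) ?_) },
    fun σ => ⟨σ.2.isLeast_dptPath hm, fun p hp => indicator_of_mem hp σ.1⟩⟩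
  dsimp only
  rw [p.2.dptPath_dptOfFilling hm, p.2.indicator_dptOfFilling hm]
end

section
/- Fix integers K, N, a, b with m = a*N − b*K > 0, and let 𝓛 be a (K,N)-periodic lattice path with 𝓛 < 𝓛[a,b]. Let DPT(𝓛) = {σ ∈ DPT(K,N,a,b) : 𝓛(σ) = 𝓛}. Then the restriction map σ ↦ σ|_{Δ(𝓛)} is a bijection from DPT(𝓛) onto the set of standard fillings τ of Δ(𝓛) by 1,…,m whose (K,N)-periodic extension to Δ'(𝓛) is standard. -/
/-!
The translates `Δ'(L) + t • (a, -b)`, `t ∈ ℤ`, tile the plane: in row `y` they are the intervals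
`[L(y + t b) + t a, L(y + (t + 1) b) + (t + 1) a)`, whose endpoints increase with `t` and grow by
`m` when `t` grows by `N`. A tableau `σ` with `𝓛(σ) = L` takes exactly the values `1, …, m` on
`Δ'(L)`, so by its two periodicities it is determined by its restriction to `Δ(L)`, and this
restriction hits every value in `[1, m]`; as `Δ(L)` has `m` cells, it is a bijection.
Conversely a filling `τ` extends to `σ(p) = τ(p₀) + t m`, where `p ∈ Δ'(L) + t • (a, -b)` and
`p₀ ∈ Δ(L)` is `p - t • (a, -b)` moved by a multiple of `(K, -N)`. Within one translate, `σ` is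
standard because the periodic extension of `τ` is; across translates because the values on the
translate `t` lie in `[t m + 1, t m + m]`.
-/

theorem Int.eq_add_mul_of_map_add_one {f : ℤ → ℤ} {c : ℤ} (h : ∀ s, f (s + 1) = f s + c)
    (s : ℤ) : f s = f 0 + s * c := by
  induction s using Int.induction_on with
  | zero => simp
  | succ n ih => rw [h, ih]; ring
  | pred n ih =>
    have := h (-(n : ℤ) - 1)
    rw [sub_add_cancel, ih] at this
    linarith

theorem map_add_zsmul_of_map_add_s9 {G : Type*} [AddCommGroup G] {f : G → ℤ} {v : G} {c : ℤ}
    (h : ∀ p, f (p + v) = f p + c) (s : ℤ) (p : G) : f (p + s • v) = f p + s * c := by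
  simpa using Int.eq_add_mul_of_map_add_one (f := fun s : ℤ => f (p + s • v))
    (fun s => by simp only [add_smul, one_smul, ← add_assoc, h]) s

theorem Monotone.existsUnique_le_lt_succ {S : ℤ → ℤ} (hS : Monotone S) {x : ℤ}
    (hlo : ∃ t, S t ≤ x) (hhi : ∃ t, x < S t) : ∃! t, S t ≤ x ∧ x < S (t + 1) := by
  obtain ⟨t₁, ht₁⟩ := hhi
  obtain ⟨t, ht, hmax⟩ := Int.exists_greatest_of_bdd
    ⟨t₁, fun t ht => (hS.reflect_lt (ht.trans_lt ht₁)).le⟩ hlo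
  have hsucc : x < S (t + 1) := not_le.1 fun h => by linarith [hmax _ h]
  refine ⟨t, ⟨ht, hsucc⟩, fun t' ht' => ?_⟩
  have := hS.reflect_lt (ht'.1.trans_lt hsucc)
  have := hS.reflect_lt (ht.trans_lt ht'.2)
  omega

theorem sum_range_map_add_sub {f : ℤ → ℤ} {n : ℕ} {c : ℤ} (h : ∀ y, f (y + n) = f y + c)
    (b : ℤ) : ∑ i ∈ Finset.range n, (f (i + b) - f i) = b * c := by
  set F : ℤ → ℤ := fun s => ∑ i ∈ Finset.range n, f (i + s)
  have step : ∀ s, F (s + 1) = F s + c := by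
    intro s
    have := Finset.sum_range_succ' (fun i : ℕ => f (i + s)) n
    rw [Finset.sum_range_succ, add_comm (n : ℤ), h] at this
    simp only [Nat.cast_add, Nat.cast_one, Nat.cast_zero, zero_add, add_right_comm _ (1 : ℤ)] at this
    simp only [F, ← add_assoc]
    linarith
  have := Int.eq_add_mul_of_map_add_one step b
  simp only [F, add_zero] at this
  rw [Finset.sum_sub_distrib, this]
  ring

section

variable {K N a b : ℤ} {L : ℤ → ℤ} {σ τ : ℤ × ℤ → ℤ}

theorem IsLP.map_add_mul (hL : IsLP K N L) (s y : ℤ) : L (y + s * N) = L y - s * K := by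
  have := map_add_zsmul_of_map_add_s9 (f := L) (c := -K) (fun y => by rw [hL.2]; ring) s y
  rw [smul_eq_mul] at this
  linarith

theorem monotone_LPshift_mul (hle : ∀ y, L y ≤ LPshift a b L y) (y : ℤ) :
    Monotone fun t : ℤ => LPshift (t * a) (t * b) L y := by
  refine monotone_int_of_le_succ fun t => ?_
  have := hle (y + t * b)
  simp only [LPshift] at this ⊢
  rw [show y + (t + 1) * b = y + t * b + b by ring]
  linarith

theorem LPshift_add_mul_period (hL : IsLP K N L) (t y : ℤ) :
    LPshift ((t + N) * a) ((t + N) * b) L y = LPshift (t * a) (t * b) L y + (a * N - b * K) := by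
  simp only [LPshift]
  rw [show y + (t + N) * b = y + t * b + b * N by ring, hL.map_add_mul]
  ring

theorem sub_zsmul_mem_deltaP_iff {p : ℤ × ℤ} {t : ℤ} :
    p - t • (a, -b) ∈ DeltaP a b L ↔
      LPshift (t * a) (t * b) L p.2 ≤ p.1 ∧ p.1 < LPshift ((t + 1) * a) ((t + 1) * b) L p.2 := by
  simp only [DeltaP, LPshift, Set.mem_ofPred_eq, Prod.fst_sub, Prod.snd_sub, Prod.smul_fst,
    Prod.smul_snd, smul_eq_mul]
  rw [show p.2 - t * -b + b = p.2 + (t + 1) * b by ring, show p.2 - t * -b = p.2 + t * b by ring]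
  constructor <;> rintro ⟨h₁, h₂⟩ <;> constructor <;> linarith

theorem IsLP.period_pos (hL : IsLP K N L) (hm : 0 < a * N - b * K)
    (hle : ∀ y, L y ≤ LPshift a b L y) : 0 < N := by
  by_contra! hN
  have := monotone_LPshift_mul hle 0 (show 0 + N ≤ 0 by linarith)
  simp only [LPshift_add_mul_period hL] at this
  linarith

theorem existsUnique_sub_zsmul_mem_deltaP (hm : 0 < a * N - b * K) (hL : IsLP K N L)
    (hle : ∀ y, L y ≤ LPshift a b L y) (p : ℤ × ℤ) :
    ∃! t : ℤ, p - t • (a, -b) ∈ DeltaP a b L := by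
  set S : ℤ → ℤ := fun t => LPshift (t * a) (t * b) L p.2
  have hper (k : ℤ) : S (k * N) = S 0 + k * (a * N - b * K) := by
    simpa using map_add_zsmul_of_map_add_s9 (f := S) (fun t => LPshift_add_mul_period hL t p.2) k 0
  simp only [sub_zsmul_mem_deltaP_iff]
  set d := |p.1 - S 0|
  have hd : 0 ≤ d := abs_nonneg _
  have hd₁ : p.1 - S 0 ≤ d := le_abs_self _
  have hd₂ : -d ≤ p.1 - S 0 := neg_abs_le _
  refine (monotone_LPshift_mul hle p.2).existsUnique_le_lt_succ ⟨-d * N, ?_⟩ ⟨(d + 1) * N, ?_⟩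
  · change S (-d * N) ≤ p.1
    rw [hper]; nlinarith
  · change p.1 < S ((d + 1) * N)
    rw [hper]; nlinarith

theorem add_zsmul_mem_deltaP_iff (hL : IsLP K N L) {p : ℤ × ℤ} (s : ℤ) :
    p + s • (K, -N) ∈ DeltaP a b L ↔ p ∈ DeltaP a b L := by
  have h₁ := hL.map_add_mul (-s) p.2
  have h₂ := hL.map_add_mul (-s) (p.2 + b)
  simp only [DeltaP, LPshift, Set.mem_ofPred_eq, Prod.fst_add, Prod.snd_add, Prod.smul_fst,
    Prod.smul_snd, smul_eq_mul]
  rw [show p.2 + s * -N = p.2 + -s * N by ring, h₁,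
    show p.2 + -s * N + b = p.2 + b + -s * N by ring, h₂]
  constructor <;> rintro ⟨h₁, h₂⟩ <;> constructor <;> linarith

open Classical in
noncomputable def windowIndex (a b : ℤ) (L : ℤ → ℤ) (p : ℤ × ℤ) : ℤ :=
  if h : ∃ t : ℤ, p - t • (a, -b) ∈ DeltaP a b L then h.choose else 0

theorem sub_windowIndex_zsmul_mem_deltaP (hm : 0 < a * N - b * K) (hL : IsLP K N L)
    (hle : ∀ y, L y ≤ LPshift a b L y) (p : ℤ × ℤ) :
    p - windowIndex a b L p • (a, -b) ∈ DeltaP a b L := by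
  have h := (existsUnique_sub_zsmul_mem_deltaP hm hL hle p).exists
  rw [windowIndex, dif_pos h]
  exact h.choose_spec

theorem windowIndex_eq (hm : 0 < a * N - b * K) (hL : IsLP K N L)
    (hle : ∀ y, L y ≤ LPshift a b L y) {p : ℤ × ℤ} {t : ℤ}
    (h : p - t • (a, -b) ∈ DeltaP a b L) : windowIndex a b L p = t :=
  (existsUnique_sub_zsmul_mem_deltaP hm hL hle p).unique
    (sub_windowIndex_zsmul_mem_deltaP hm hL hle p) h

theorem windowIndex_add_period (hm : 0 < a * N - b * K) (hL : IsLP K N L)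
    (hle : ∀ y, L y ≤ LPshift a b L y) (p : ℤ × ℤ) :
    windowIndex a b L (p + (K, -N)) = windowIndex a b L p := by
  refine windowIndex_eq hm hL hle ?_
  have := (add_zsmul_mem_deltaP_iff hL 1).2 (sub_windowIndex_zsmul_mem_deltaP hm hL hle p)
  rwa [one_smul, sub_add_eq_add_sub] at this

theorem windowIndex_add_shift (hm : 0 < a * N - b * K) (hL : IsLP K N L)
    (hle : ∀ y, L y ≤ LPshift a b L y) (p : ℤ × ℤ) :
    windowIndex a b L (p + (a, -b)) = windowIndex a b L p + 1 := by
  refine windowIndex_eq hm hL hle ?_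
  rw [add_smul, one_smul, add_sub_add_right_eq_sub]
  exact sub_windowIndex_zsmul_mem_deltaP hm hL hle p

theorem windowIndex_of_mem_deltaP (hm : 0 < a * N - b * K) (hL : IsLP K N L)
    (hle : ∀ y, L y ≤ LPshift a b L y) {p : ℤ × ℤ} (hp : p ∈ DeltaP a b L) :
    windowIndex a b L p = 0 :=
  windowIndex_eq hm hL hle (by rwa [zero_smul, sub_zero])

theorem monotone_windowIndex (hm : 0 < a * N - b * K) (hL : IsLP K N L)
    (hle : ∀ y, L y ≤ LPshift a b L y) : Monotone (windowIndex a b L) := by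
  intro p q hpq
  have hp := sub_zsmul_mem_deltaP_iff.1 (sub_windowIndex_zsmul_mem_deltaP hm hL hle p)
  have hq := sub_zsmul_mem_deltaP_iff.1 (sub_windowIndex_zsmul_mem_deltaP hm hL hle q)
  set t' := windowIndex a b L q
  have hrow : LPshift ((t' + 1) * a) ((t' + 1) * b) L q.2
      ≤ LPshift ((t' + 1) * a) ((t' + 1) * b) L p.2 := by
    simp only [LPshift]
    linarith [hL.1 (show p.2 + (t' + 1) * b ≤ q.2 + (t' + 1) * b by linarith [hpq.2])]
  have := (monotone_LPshift_mul hle p.2).reflect_lt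
    (show LPshift (windowIndex a b L p * a) _ L p.2 < LPshift ((t' + 1) * a) _ L p.2 by
      linarith [hpq.1])
  omega

theorem le_iff_windowIndex_nonneg (hm : 0 < a * N - b * K) (hL : IsLP K N L)
    (hle : ∀ y, L y ≤ LPshift a b L y) (p : ℤ × ℤ) :
    L p.2 ≤ p.1 ↔ 0 ≤ windowIndex a b L p := by
  have hS := monotone_LPshift_mul hle p.2
  have hp := sub_zsmul_mem_deltaP_iff.1 (sub_windowIndex_zsmul_mem_deltaP hm hL hle p)
  have hS₀ : LPshift (0 * a) (0 * b) L p.2 = L p.2 := by simp [LPshift]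
  constructor
  · intro h
    have := hS.reflect_lt (show LPshift (0 * a) (0 * b) L p.2 < _ from hS₀ ▸ h.trans_lt hp.2)
    omega
  · exact fun h => hS₀ ▸ (hS h).trans hp.1

def periodRep (K N : ℤ) (p : ℤ × ℤ) : ℤ × ℤ := p + (p.2 / N) • (K, -N)

theorem periodRep_snd (K N : ℤ) (p : ℤ × ℤ) : (periodRep K N p).2 = p.2 % N := by
  simp only [periodRep, Prod.snd_add, Prod.smul_snd, smul_eq_mul, Int.emod_def]
  ring

theorem periodRep_add_neg_zsmul (K N : ℤ) (p : ℤ × ℤ) :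
    periodRep K N p + (-(p.2 / N)) • (K, -N) = p := by
  rw [periodRep, neg_zsmul, add_neg_cancel_right]

theorem periodRep_mem_delta (hN : 0 < N) (hL : IsLP K N L) {p : ℤ × ℤ}
    (hp : p ∈ DeltaP a b L) : periodRep K N p ∈ Delta N a b L :=
  ⟨(add_zsmul_mem_deltaP_iff hL _).2 hp, periodRep_snd K N p ▸ Int.emod_nonneg _ hN.ne',
    periodRep_snd K N p ▸ Int.emod_lt_of_pos _ hN⟩

theorem periodRep_of_mem_delta {p : ℤ × ℤ} (hp : p ∈ Delta N a b L) : periodRep K N p = p := by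
  rw [periodRep, Int.ediv_eq_zero_of_lt hp.2.1 hp.2.2, zero_smul, add_zero]

theorem periodRep_add_zsmul (hN : N ≠ 0) (p : ℤ × ℤ) (s : ℤ) :
    periodRep K N (p + s • (K, -N)) = periodRep K N p := by
  have : (p.2 + s * -N) / N = p.2 / N - s := by
    rw [mul_neg, ← neg_mul, Int.add_mul_ediv_right _ _ hN]; ring
  simp only [periodRep, Prod.snd_add, Prod.smul_snd, smul_eq_mul, this]
  rw [add_assoc, ← add_smul, add_sub_cancel]

theorem IsDPT.map_add_zsmul_period (hσ : IsDPT K N a b σ) (s : ℤ) (p : ℤ × ℤ) :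
    σ (p + s • (K, -N)) = σ p := by
  simpa using map_add_zsmul_of_map_add_s9 (f := σ) (v := (K, -N)) (c := 0)
    (fun ⟨x, y⟩ => by simpa [← sub_eq_add_neg] using hσ.2.1 x y) s p

theorem IsDPT.map_add_zsmul_shift (hσ : IsDPT K N a b σ) (s : ℤ) (p : ℤ × ℤ) :
    σ (p + s • (a, -b)) = σ p + s * (a * N - b * K) :=
  map_add_zsmul_of_map_add_s9 (fun ⟨x, y⟩ => by simpa [← sub_eq_add_neg] using hσ.2.2.1 x y) s p

theorem IsDPT.map_periodRep (hσ : IsDPT K N a b σ) (p : ℤ × ℤ) : σ (periodRep K N p) = σ p :=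
  hσ.map_add_zsmul_period _ p

theorem IsDPT.lt_add_single (hσ : IsDPT K N a b σ) (p : ℤ × ℤ) {e : ℤ × ℤ}
    (he : e = (1, 0) ∨ e = (0, 1)) : σ p < σ (p + e) := by
  obtain ⟨x, y⟩ := p
  rcases he with rfl | rfl
  · simpa using hσ.2.2.2.1 x y
  · simpa using hσ.2.2.2.2 x y

theorem IsDPT.mem_deltaP_iff (hσ : IsDPT K N a b σ)
    (hleast : ∀ y, IsLeast {x : ℤ | 1 ≤ σ (x, y)} (L y)) (p : ℤ × ℤ) :
    p ∈ DeltaP a b L ↔ σ p ∈ Set.Icc 1 (a * N - b * K) := by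
  obtain ⟨x, y⟩ := p
  have hrow (y : ℤ) : StrictMono fun x => σ (x, y) :=
    strictMono_int_of_lt_succ fun x => hσ.2.2.2.1 x y
  have hpos (x y : ℤ) : L y ≤ x ↔ 1 ≤ σ (x, y) :=
    ⟨fun h => (hleast y).1.trans ((hrow y).monotone h), fun h => (hleast y).2 h⟩
  have hshift := hσ.2.2.1 (x - a) (y + b)
  rw [sub_add_cancel, add_sub_cancel_right] at hshift
  simp only [DeltaP, LPshift, Set.mem_ofPred_eq, Set.mem_Icc, hpos]
  rw [← not_le, ← le_sub_iff_add_le, hpos]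
  omega

theorem extStandard_iff {Δ : Set (ℤ × ℤ)} :
    ExtStandard K N Δ τ ↔ ∀ p ∈ Δ, ∀ q ∈ Δ, ∀ s s' : ℤ, ∀ e : ℤ × ℤ, (e = (1, 0) ∨ e = (0, 1)) →
      p + s • (K, -N) + e = q + s' • (K, -N) → τ p < τ q := by
  constructor
  · rintro h ⟨x, y⟩ hp ⟨x', y'⟩ hq s s' e he heq
    rcases he with rfl | rfl <;>
      simp only [Prod.smul_mk, smul_eq_mul, Prod.mk_add_mk, Prod.mk.injEq] at heq
    · exact (h x y x' y' s s' hp hq).1 ⟨by linarith, by linarith⟩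
    · exact (h x y x' y' s s' hp hq).2 ⟨by linarith, by linarith⟩
  · intro h x y x' y' s s' hp hq
    refine ⟨fun ⟨h₁, h₂⟩ => h _ hp _ hq s s' _ (.inl rfl) ?_,
      fun ⟨h₁, h₂⟩ => h _ hp _ hq s s' _ (.inr rfl) ?_⟩ <;>
    simp only [Prod.smul_mk, smul_eq_mul, Prod.mk_add_mk, Prod.mk.injEq] <;>
    constructor <;> linarith

theorem exists_finset_coe_eq_delta (hm : 0 < a * N - b * K) (hL : IsLP K N L)
    (hle : ∀ y, L y ≤ LPshift a b L y) :
    ∃ D : Finset (ℤ × ℤ), ↑D = Delta N a b L ∧ (D.card : ℤ) = a * N - b * K := by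
  classical
  obtain ⟨n, hn⟩ : ∃ n : ℕ, (n : ℤ) = N := ⟨N.toNat, Int.toNat_of_nonneg (hL.period_pos hm hle).le⟩
  let row (i : ℕ) : Finset (ℤ × ℤ) := (Finset.Ico (L i) (L (i + b) + a)).image fun x => (x, i)
  have hdisj : (Set.univ : Set ℕ).PairwiseDisjoint row := by
    intro i _ j _ hij
    simp only [Function.onFun, Finset.disjoint_left, row, Finset.mem_image]
    rintro _ ⟨x, -, rfl⟩ ⟨x', -, hx⟩
    simp only [Prod.mk.injEq] at hx
    exact hij (by omega)
  refine ⟨(Finset.range n).biUnion row, ?_, ?_⟩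
  · ext ⟨x, y⟩
    simp only [Finset.coe_biUnion, Finset.coe_range, Set.mem_iUnion, Finset.mem_coe, row,
      Finset.mem_image, Finset.mem_Ico, Prod.mk.injEq, Set.mem_Iio,
      Delta, DeltaP, LPshift, Set.mem_ofPred_eq]
    constructor
    · rintro ⟨i, hi, x, hx, rfl, rfl⟩
      exact ⟨hx, by positivity, by omega⟩
    · rintro ⟨hx, hy₀, hy⟩
      lift y to ℕ using hy₀
      exact ⟨y, by omega, x, hx, rfl, rfl⟩
  · rw [Finset.card_biUnion (hdisj.subset (Set.subset_univ _))]
    have hrow (i : ℕ) : ((row i).card : ℤ) = L (i + b) - L i + a := by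
      rw [Finset.card_image_of_injective _ fun x x' h => (Prod.mk.injEq _ _ _ _ ▸ h).1,
        Int.card_Ico]
      have := hle i
      simp only [LPshift] at this
      omega
    push_cast
    simp only [hrow, Finset.sum_add_distrib, Finset.sum_const, Finset.card_range, nsmul_eq_mul]
    rw [sum_range_map_add_sub (c := -K) (fun y => by rw [hn, hL.2]; ring), hn]
    ring

theorem IsDPT.isStdFilling_indicator (hm : 0 < a * N - b * K)
    (hL : IsLP K N L) (hle : ∀ y, L y ≤ LPshift a b L y) (hσ : IsDPT K N a b σ)
    (hleast : ∀ y, IsLeast {x : ℤ | 1 ≤ σ (x, y)} (L y)) :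
    IsStdFilling K N a b L ((Delta N a b L).indicator σ) := by
  set Δ := Delta N a b L with hΔ
  have hmaps : Set.MapsTo (Δ.indicator σ) Δ (Set.Icc 1 (a * N - b * K)) := fun p hp => by
    rw [Set.indicator_of_mem hp]
    exact (hσ.mem_deltaP_iff hleast p).1 hp.1
  have hsurj : Set.SurjOn (Δ.indicator σ) Δ (Set.Icc 1 (a * N - b * K)) := fun v hv => by
    obtain ⟨p, rfl⟩ := hσ.1 v
    have hrep := periodRep_mem_delta (hL.period_pos hm hle) hL ((hσ.mem_deltaP_iff hleast p).2 hv)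
    exact ⟨periodRep K N p, hrep, by rw [Set.indicator_of_mem hrep, hσ.map_periodRep]⟩
  -- `Δ` has exactly `m` cells, so the surjection onto `[1, m]` is injective.
  have hinj : Set.InjOn (Δ.indicator σ) Δ := by
    obtain ⟨D, hD, hcard⟩ := exists_finset_coe_eq_delta hm hL hle
    rw [← Finset.coe_Icc] at hmaps hsurj
    rw [hΔ, ← hD] at hmaps hsurj ⊢
    exact Finset.injOn_of_surjOn_of_card_le _ hmaps hsurj (by rw [Int.card_Icc]; omega)
  refine ⟨⟨hmaps, hinj, hsurj⟩, fun x y hp hq => ?_, fun x y hp hq => ?_⟩ <;>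
    rw [Set.indicator_of_mem hp, Set.indicator_of_mem hq]
  · exact hσ.2.2.2.1 x y
  · exact hσ.2.2.2.2 x y

theorem IsDPT.extStandard_indicator (hσ : IsDPT K N a b σ) :
    ExtStandard K N (Delta N a b L) ((Delta N a b L).indicator σ) := by
  refine extStandard_iff.2 fun p hp q hq s s' e he heq => ?_
  rw [Set.indicator_of_mem hp, Set.indicator_of_mem hq, ← hσ.map_add_zsmul_period s p,
    ← hσ.map_add_zsmul_period s' q, ← heq]
  exact hσ.lt_add_single _ he

noncomputable def extendFilling (K N a b : ℤ) (L : ℤ → ℤ) (τ : ℤ × ℤ → ℤ) (p : ℤ × ℤ) : ℤ :=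
  τ (periodRep K N (p - windowIndex a b L p • (a, -b))) + windowIndex a b L p * (a * N - b * K)

theorem extendFilling_of_mem_delta (hm : 0 < a * N - b * K) (hL : IsLP K N L)
    (hle : ∀ y, L y ≤ LPshift a b L y) {p : ℤ × ℤ} (hp : p ∈ Delta N a b L) :
    extendFilling K N a b L τ p = τ p := by
  rw [extendFilling, windowIndex_of_mem_deltaP hm hL hle hp.1, zero_smul, sub_zero,
    periodRep_of_mem_delta hp, zero_mul, add_zero]

theorem extendFilling_add_period (hm : 0 < a * N - b * K) (hL : IsLP K N L)
    (hle : ∀ y, L y ≤ LPshift a b L y) (p : ℤ × ℤ) :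
    extendFilling K N a b L τ (p + (K, -N)) = extendFilling K N a b L τ p := by
  rw [extendFilling, extendFilling, windowIndex_add_period hm hL hle, ← sub_add_eq_add_sub,
    ← one_zsmul (K, -N), periodRep_add_zsmul (hL.period_pos hm hle).ne']

theorem extendFilling_add_shift (hm : 0 < a * N - b * K) (hL : IsLP K N L)
    (hle : ∀ y, L y ≤ LPshift a b L y) (p : ℤ × ℤ) :
    extendFilling K N a b L τ (p + (a, -b)) = extendFilling K N a b L τ p + (a * N - b * K) := by
  rw [extendFilling, extendFilling, windowIndex_add_shift hm hL hle, add_smul, one_smul,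
    add_sub_add_right_eq_sub]
  ring

theorem extendFilling_mem_Icc (hm : 0 < a * N - b * K) (hL : IsLP K N L)
    (hle : ∀ y, L y ≤ LPshift a b L y)
    (hτ : Set.MapsTo τ (Delta N a b L) (Set.Icc 1 (a * N - b * K))) (p : ℤ × ℤ) :
    extendFilling K N a b L τ p ∈ Set.Icc (windowIndex a b L p * (a * N - b * K) + 1)
      (windowIndex a b L p * (a * N - b * K) + (a * N - b * K)) := by
  have := hτ (periodRep_mem_delta (hL.period_pos hm hle) hL
    (sub_windowIndex_zsmul_mem_deltaP hm hL hle p))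
  simp only [Set.mem_Icc, extendFilling] at this ⊢
  omega

theorem extendFilling_lt_add_single (hm : 0 < a * N - b * K) (hL : IsLP K N L)
    (hle : ∀ y, L y ≤ LPshift a b L y)
    (hτ : Set.MapsTo τ (Delta N a b L) (Set.Icc 1 (a * N - b * K)))
    (hext : ExtStandard K N (Delta N a b L) τ) (p : ℤ × ℤ) {e : ℤ × ℤ}
    (he : e = (1, 0) ∨ e = (0, 1)) :
    extendFilling K N a b L τ p < extendFilling K N a b L τ (p + e) := by
  have hN := hL.period_pos hm hle
  have hpe : p ≤ p + e := by rcases he with rfl | rfl <;> simp [Prod.le_def]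
  rcases (monotone_windowIndex hm hL hle hpe).eq_or_lt with hT | hT
  · set u := p - windowIndex a b L p • (a, -b)
    have hu := sub_windowIndex_zsmul_mem_deltaP hm hL hle p
    have hue := sub_windowIndex_zsmul_mem_deltaP hm hL hle (p + e)
    rw [← hT, add_sub_right_comm] at hue
    have key : τ (periodRep K N u) < τ (periodRep K N (u + e)) :=
      extStandard_iff.1 hext _ (periodRep_mem_delta hN hL hu) _ (periodRep_mem_delta hN hL hue)
        (-(u.2 / N)) (-((u + e).2 / N)) e he
        (by rw [periodRep_add_neg_zsmul, periodRep_add_neg_zsmul])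
    rw [extendFilling, extendFilling, ← hT, add_sub_right_comm]
    exact add_lt_add_left key _
  · have h₁ := (extendFilling_mem_Icc hm hL hle hτ p).2
    have h₂ := (extendFilling_mem_Icc hm hL hle hτ (p + e)).1
    nlinarith

theorem isDPT_extendFilling (hm : 0 < a * N - b * K) (hL : IsLP K N L)
    (hle : ∀ y, L y ≤ LPshift a b L y) (hτ : IsStdFilling K N a b L τ)
    (hext : ExtStandard K N (Delta N a b L) τ) :
    IsDPT K N a b (extendFilling K N a b L τ) := by
  set m := a * N - b * K
  refine ⟨fun v => ?_, fun x y => ?_, fun x y => ?_, fun x y => ?_, fun x y => ?_⟩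
  · obtain ⟨q, hq, hqv⟩ := hτ.1.2.2 (show (v - 1) % m + 1 ∈ Set.Icc 1 m by
      constructor <;> linarith [Int.emod_nonneg (v - 1) hm.ne', Int.emod_lt_of_pos (v - 1) hm])
    refine ⟨q + ((v - 1) / m) • (a, -b), ?_⟩
    rw [map_add_zsmul_of_map_add_s9 (extendFilling_add_shift hm hL hle) _ q,
      extendFilling_of_mem_delta hm hL hle hq, hqv]
    linarith [Int.mul_ediv_add_emod (v - 1) m]
  · simpa [← sub_eq_add_neg] using extendFilling_add_period (τ := τ) hm hL hle (x, y)
  · simpa [← sub_eq_add_neg] using extendFilling_add_shift (τ := τ) hm hL hle (x, y)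
  · simpa using extendFilling_lt_add_single hm hL hle hτ.1.1 hext (x, y) (.inl rfl)
  · simpa using extendFilling_lt_add_single hm hL hle hτ.1.1 hext (x, y) (.inr rfl)

theorem isLeast_extendFilling (hm : 0 < a * N - b * K) (hL : IsLP K N L)
    (hle : ∀ y, L y ≤ LPshift a b L y)
    (hτ : Set.MapsTo τ (Delta N a b L) (Set.Icc 1 (a * N - b * K))) (y : ℤ) :
    IsLeast {x : ℤ | 1 ≤ extendFilling K N a b L τ (x, y)} (L y) := by
  have key (x : ℤ) : 1 ≤ extendFilling K N a b L τ (x, y) ↔ L y ≤ x := by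
    rw [le_iff_windowIndex_nonneg hm hL hle (x, y)]
    have := extendFilling_mem_Icc hm hL hle hτ (x, y)
    constructor
    · intro h
      by_contra! hneg
      nlinarith [this.2]
    · intro h
      nlinarith [this.1]
  exact ⟨(key _).2 le_rfl, fun x hx => (key x).1 hx⟩

theorem IsDPT.extendFilling_indicator (hm : 0 < a * N - b * K)
    (hL : IsLP K N L) (hle : ∀ y, L y ≤ LPshift a b L y) (hσ : IsDPT K N a b σ) :
    extendFilling K N a b L ((Delta N a b L).indicator σ) = σ := by
  funext p
  have hu := sub_windowIndex_zsmul_mem_deltaP hm hL hle p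
  rw [extendFilling, Set.indicator_of_mem (periodRep_mem_delta (hL.period_pos hm hle) hL hu),
    hσ.map_periodRep, sub_eq_add_neg, ← neg_zsmul, hσ.map_add_zsmul_shift]
  ring

theorem indicator_extendFilling (hm : 0 < a * N - b * K) (hL : IsLP K N L)
    (hle : ∀ y, L y ≤ LPshift a b L y) (hτ : ∀ p, p ∉ Delta N a b L → τ p = 0) :
    (Delta N a b L).indicator (extendFilling K N a b L τ) = τ := by
  funext p
  by_cases hp : p ∈ Delta N a b L
  · rw [Set.indicator_of_mem hp, extendFilling_of_mem_delta hm hL hle hp]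
  · rw [Set.indicator_of_notMem hp, hτ p hp]

end

theorem dpt_fixed_path_bijection_general (K N a b : ℤ) (hm : 0 < a * N - b * K)
    (L : ℤ → ℤ) (hL : IsLP K N L)
    (hle : ∀ y : ℤ, L y ≤ LPshift a b L y) :
    ∃ F : {σ : ℤ × ℤ → ℤ // IsDPT K N a b σ ∧
            ∀ y : ℤ, IsLeast {x : ℤ | 1 ≤ σ (x, y)} (L y)} ≃
          {τ : ℤ × ℤ → ℤ // IsStdFilling K N a b L τ ∧
            ExtStandard K N (Delta N a b L) τ ∧
            ∀ p : ℤ × ℤ, p ∉ Delta N a b L → τ p = 0},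
      ∀ σ, ∀ p ∈ Delta N a b L, (F σ).1 p = σ.1 p :=
  ⟨{ toFun := fun σ => ⟨(Delta N a b L).indicator σ.1,
        σ.2.1.isStdFilling_indicator hm hL hle σ.2.2, σ.2.1.extStandard_indicator,
        fun _ hp => Set.indicator_of_notMem hp _⟩
     invFun := fun τ => ⟨extendFilling K N a b L τ.1,
        isDPT_extendFilling hm hL hle τ.2.1 τ.2.2.1, isLeast_extendFilling hm hL hle τ.2.1.1.1⟩
     left_inv := fun σ => Subtype.ext (σ.2.1.extendFilling_indicator hm hL hle)
     right_inv := fun τ => Subtype.ext (indicator_extendFilling hm hL hle τ.2.2.2) },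
    fun _ _ hp => Set.indicator_of_mem hp _⟩

/-- For a fixed `(K,N)`-periodic lattice path `L` with `L < L[a,b]`, restriction
to `Δ(L)` is a bijection from `DPT(L) = {σ ∈ DPT(K,N,a,b) : 𝓛(σ) = L}` onto the
set of standard fillings of `Δ(L)` by `1,…,m` whose periodic extension to `Δ'(L)`
is standard (fillings normalized to be `0` outside `Δ(L)`). -/
theorem dpt_fixed_path_bijection (K N a b : ℤ) (hm : 0 < a * N - b * K)
    (L : ℤ → ℤ) (hL : IsLP K N L)
    (hle : ∀ y : ℤ, L y ≤ LPshift a b L y) (hne : L ≠ LPshift a b L) :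
    ∃ F : {σ : ℤ × ℤ → ℤ // IsDPT K N a b σ ∧
            ∀ y : ℤ, IsLeast {x : ℤ | 1 ≤ σ (x, y)} (L y)} ≃
          {τ : ℤ × ℤ → ℤ // IsStdFilling K N a b L τ ∧
            ExtStandard K N (Delta N a b L) τ ∧
            ∀ p : ℤ × ℤ, p ∉ Delta N a b L → τ p = 0},
      ∀ σ, ∀ p ∈ Delta N a b L, (F σ).1 p = σ.1 p :=
  dpt_fixed_path_bijection_general K N a b hm L hL hle
end
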